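/- arXiv:1706.02405 — 3 statements merged into one kernel-verified Lean document; each statement's English description precedes it below -/
import Mathlib

section
/- Let V and W be finite-dimensional real inner product spaces, let P be an endomorphism of V such that no complex eigenvalue λ of (the complexification of) P has −λ also an eigenvalue (in particular P and P² + I are invertible), let c ∈ ℝ, let ψ : V → ℝ be linear and ν : V → W a linear map. Set Q = νᵗν + c·ψᵗψ, ρ = Pᵗ∘Q∘P, T = −Pᵗ − (Pᵗ)⁻¹, and L = (P² + I)⁻¹∘P². Let X ∈ End(V) be the unique solution of the equation Xᵗ∘P + Pᵗ∘Xᵗ = −T∘ρ. Then: (1) X + Xᵗ = Q + ρ; (2) T∘X = Xᵗ∘Tᵗ; and (3) X∘L + Lᵗ∘Xᵗ = ρ. -/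
open scoped TensorProduct

variable {V W : Type*}

/-- `νᵗν`, the symmetric endomorphism `u ↦ νᵗ(ν u)` associated to a linear map `ν`. -/
noncomputable def gram [NormedAddCommGroup V] [InnerProductSpace ℝ V] [FiniteDimensional ℝ V]
    [NormedAddCommGroup W] [InnerProductSpace ℝ W] [FiniteDimensional ℝ W]
    (ν : V →ₗ[ℝ] W) : Module.End ℝ V :=
  LinearMap.adjoint ν ∘ₗ ν

/-!
All three identities come from the uniqueness of solutions of the Lyapunov equation
`Z P + Pᵗ Z = 0`. By the defining equation of `X` and its adjoint, both `X + Xᵗ - Q - ρ` and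
`(Pᵗ² + 1) X P - Pᵗ Xᵗ (P² + 1)` solve it, so they vanish; (2) and (3) follow from the second
identity after cancelling the invertible factors `P`, `Pᵗ` and `P² + 1`.

Uniqueness: the hypothesis says that `χ = charpoly P = charpoly Pᵗ` and `q = χ ∘ (-X)` have no
common complex root, so they are coprime over `ℝ`. From `Pᵗ Z = Z (-P)` we get
`q(Pᵗ) Z = Z q(-P) = Z χ(P) = 0`, and a Bézout identity together with `χ(Pᵗ) = 0` makes `q(Pᵗ)`
invertible. The same Bézout argument, with `X` and `X² + 1` coprime to `χ`, shows that `P` and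
`P² + 1` are invertible.
-/

open Polynomial

section Coprime

variable {R S : Type*} [CommRing R] [Ring S] [Algebra R S]

theorem SemiconjBy.aeval {Z A B : S} (h : SemiconjBy Z B A) (p : R[X]) :
    SemiconjBy Z (aeval B p) (aeval A p) := by
  induction p using Polynomial.induction_on' with
  | add p q hp hq => simpa only [map_add] using hp.add_right hq
  | monomial n r =>
    simp only [aeval_monomial]
    exact SemiconjBy.mul_right (Algebra.commutes r Z).symm (h.pow_right n)

theorem Polynomial.isUnit_aeval_of_isCoprime {p q : R[X]} (hpq : IsCoprime p q) {a : S}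
    (hq : aeval a q = 0) : IsUnit (aeval a p) := by
  obtain ⟨u, v, huv⟩ := hpq
  have hu : aeval a (u * p) = 1 := by simpa [hq] using congrArg (aeval a) huv
  refine ⟨⟨aeval a p, aeval a u, ?_, ?_⟩, rfl⟩ <;> rw [← map_mul]
  · rwa [mul_comm]
  · exact hu

theorem eq_zero_of_semiconjBy_of_isCoprime {Z A B : S} (h : SemiconjBy Z B A) {p q : R[X]}
    (hpq : IsCoprime p q) (hA : aeval A p = 0) (hB : aeval B q = 0) : Z = 0 := by
  refine (isUnit_aeval_of_isCoprime hpq.symm hA).mul_left_cancel ?_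
  rw [mul_zero, ← (h.aeval q).eq, hB, mul_zero]

end Coprime

theorem Module.End.hasEigenvalue_baseChange_iff {K M L : Type*} [CommRing K] [AddCommGroup M]
    [Module K M] [Module.Free K M] [Module.Finite K M] [CommRing L] [IsDomain L] [Algebra K L]
    (f : Module.End K M) (μ : L) :
    HasEigenvalue (f.baseChange L) μ ↔ aeval μ f.charpoly = 0 := by
  rw [hasEigenvalue_iff_isRoot_charpoly, LinearMap.charpoly_baseChange, IsRoot,
    eval_map_algebraMap]

theorem LinearMap.charpoly_adjoint {E : Type*} [NormedAddCommGroup E] [InnerProductSpace ℝ E]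
    [FiniteDimensional ℝ E] (f : Module.End ℝ E) : (adjoint f).charpoly = f.charpoly := by
  let b := (stdOrthonormalBasis ℝ E).toBasis
  rw [← charpoly_toMatrix _ b, ← charpoly_toMatrix f b, toMatrix_adjoint,
    Matrix.conjTranspose_eq_transpose_of_trivial, Matrix.charpoly_transpose]

def Polynomial.NoOppositeRoots (p : ℝ[X]) : Prop :=
  ∀ μ : ℂ, aeval μ p = 0 → aeval (-μ) p ≠ 0

theorem Polynomial.NoOppositeRoots.isCoprime_comp_neg_X {p : ℝ[X]} (hp : p.NoOppositeRoots) :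
    IsCoprime p (p.comp (-X)) := by
  rw [isCoprime_iff_aeval_ne_zero_of_isAlgClosed ℝ ℂ]
  intro μ
  rw [aeval_comp, map_neg, aeval_X]
  by_contra! h
  exact hp μ h.1 h.2

theorem Polynomial.NoOppositeRoots.isCoprime_X {p : ℝ[X]} (hp : p.NoOppositeRoots) :
    IsCoprime X p := by
  rw [isCoprime_iff_aeval_ne_zero_of_isAlgClosed ℝ ℂ]
  intro μ
  rw [aeval_X]
  by_contra! h
  obtain ⟨rfl, h0⟩ := h
  exact hp 0 h0 (by rwa [neg_zero])

/-- The roots `±i` of `X² + 1` are exchanged by conjugation, which preserves the roots of the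
real polynomial `p`. -/
theorem Polynomial.NoOppositeRoots.isCoprime_X_sq_add_one {p : ℝ[X]} (hp : p.NoOppositeRoots) :
    IsCoprime (X ^ 2 + 1) p := by
  rw [isCoprime_iff_aeval_ne_zero_of_isAlgClosed ℝ ℂ]
  intro μ
  by_contra! h
  obtain ⟨hμ, h0⟩ := h
  have hconj : (starRingEnd ℂ) μ = -μ := by
    have : μ ^ 2 = Complex.I ^ 2 := by
      rw [Complex.I_sq]; simpa [add_eq_zero_iff_eq_neg] using hμ
    rcases (Commute.all _ _).sq_eq_sq_iff_eq_or_eq_neg.mp this with rfl | rfl <;> simp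
  exact hp μ h0 (by rw [← hconj, aeval_conj, h0, map_zero])

theorem Polynomial.NoOppositeRoots.eq_zero_of_mul_add_star_mul_eq_zero {E : Type*}
    [NormedAddCommGroup E] [InnerProductSpace ℝ E] [FiniteDimensional ℝ E] {P : Module.End ℝ E}
    (hP : P.charpoly.NoOppositeRoots) {Z : Module.End ℝ E} (hZ : Z * P + star P * Z = 0) :
    Z = 0 := by
  refine eq_zero_of_semiconjBy_of_isCoprime (A := star P) (B := -P) ?_
    hP.isCoprime_comp_neg_X ?_ ?_
  · rw [SemiconjBy, mul_neg, neg_eq_iff_add_eq_zero, hZ]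
  · rw [LinearMap.star_eq_adjoint, ← LinearMap.charpoly_adjoint]
    exact LinearMap.aeval_self_charpoly _
  · rw [aeval_comp, map_neg, aeval_X, neg_neg]
    exact LinearMap.aeval_self_charpoly P

section StarRing

variable {R : Type*} [Ring R] [StarRing R] {P Q X : R}

theorem neg_mul_star_mul_mul_eq_of_isUnit (hP : IsUnit P) {T : R}
    (hT : T = -star P - Ring.inverse (star P)) :
    -(T * (star P * Q * P)) = star P ^ 2 * Q * P + Q * P := by
  calc -(T * (star P * Q * P))
      = star P ^ 2 * Q * P + Ring.inverse (star P) * star P * Q * P := by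
        rw [hT]; noncomm_ring
    _ = star P ^ 2 * Q * P + Q * P := by rw [Ring.inverse_mul_cancel _ hP.star, one_mul]

theorem star_lyapunov_eq (hQ : IsSelfAdjoint Q)
    (hX : star X * P + star P * star X = star P ^ 2 * Q * P + Q * P) :
    X * P + star P * X = star P * Q * P ^ 2 + star P * Q := by
  have := congrArg star hX
  simp only [star_add, star_mul, star_pow, star_star, hQ.star_eq] at this
  rw [add_comm, this, mul_assoc]

theorem add_star_eq_of_lyapunov (hS : ∀ Z : R, Z * P + star P * Z = 0 → Z = 0)
    (hQ : IsSelfAdjoint Q) (hX : star X * P + star P * star X = star P ^ 2 * Q * P + Q * P) :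
    X + star X = Q + star P * Q * P := by
  rw [← sub_eq_zero]
  apply hS
  calc (X + star X - (Q + star P * Q * P)) * P + star P * (X + star X - (Q + star P * Q * P))
      = (X * P + star P * X) + (star X * P + star P * star X)
        - (Q * P + star P * Q * P * P + star P * Q + star P * (star P * Q * P)) := by
        noncomm_ring
    _ = 0 := by rw [hX, star_lyapunov_eq hQ hX]; noncomm_ring

theorem intertwining_of_lyapunov (hS : ∀ Z : R, Z * P + star P * Z = 0 → Z = 0)
    (hQ : IsSelfAdjoint Q) (hX : star X * P + star P * star X = star P ^ 2 * Q * P + Q * P) :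
    (star P ^ 2 + 1) * X * P = star P * star X * (P ^ 2 + 1) := by
  rw [← sub_eq_zero]
  apply hS
  calc ((star P ^ 2 + 1) * X * P - star P * star X * (P ^ 2 + 1)) * P
        + star P * ((star P ^ 2 + 1) * X * P - star P * star X * (P ^ 2 + 1))
      = (star P ^ 2 + 1) * (X * P + star P * X) * P
        - star P * (star X * P + star P * star X) * (P ^ 2 + 1) := by noncomm_ring
    _ = 0 := by rw [hX, star_lyapunov_eq hQ hX]; noncomm_ring

theorem mul_eq_star_mul_star_of_intertwining (hP : IsUnit P) {T : R}
    (hT : T = -star P - Ring.inverse (star P))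
    (hG : (star P ^ 2 + 1) * X * P = star P * star X * (P ^ 2 + 1)) :
    T * X = star X * star T := by
  have hPT : star P * T = -(star P ^ 2 + 1) := by
    rw [hT, mul_sub, Ring.mul_inverse_cancel _ hP.star]; noncomm_ring
  have hTP : star T * P = -(P ^ 2 + 1) := by
    rw [hT, star_sub, star_neg, star_star, ← Ring.inverse_star, star_star, sub_mul,
      Ring.inverse_mul_cancel _ hP]
    noncomm_ring
  refine hP.star.mul_left_cancel (hP.mul_right_cancel ?_)
  calc star P * (T * X) * P = star P * T * X * P := by noncomm_ring
    _ = -((star P ^ 2 + 1) * X * P) := by rw [hPT]; noncomm_ring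
    _ = star P * star X * (star T * P) := by rw [hG, hTP]; noncomm_ring
    _ = star P * (star X * star T) * P := by noncomm_ring

theorem mul_add_star_mul_star_eq_of_intertwining (hN : IsUnit (P ^ 2 + 1)) {L : R}
    (hL : L = Ring.inverse (P ^ 2 + 1) * P ^ 2)
    (hG : (star P ^ 2 + 1) * X * P = star P * star X * (P ^ 2 + 1))
    (hX : star X * P + star P * star X = star P ^ 2 * Q * P + Q * P) :
    X * L + star L * star X = star P * Q * P := by
  have hLN : L * (P ^ 2 + 1) = P ^ 2 := by
    have hcomm : Commute (P ^ 2) (P ^ 2 + 1) := (Commute.refl _).add_right (Commute.one_right _)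
    rw [hL, mul_assoc, hcomm.eq, ← mul_assoc, Ring.inverse_mul_cancel _ hN, one_mul]
  have hNL : (star P ^ 2 + 1) * star L = star P ^ 2 := by
    simpa only [star_mul, star_add, star_pow, star_one] using congrArg star hLN
  have hN' : IsUnit (star P ^ 2 + 1) := by simpa only [star_add, star_pow, star_one] using hN.star
  refine hN'.mul_left_cancel (hN.mul_right_cancel ?_)
  calc (star P ^ 2 + 1) * (X * L + star L * star X) * (P ^ 2 + 1)
      = (star P ^ 2 + 1) * X * (L * (P ^ 2 + 1))
        + (star P ^ 2 + 1) * star L * star X * (P ^ 2 + 1) := by noncomm_ring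
    _ = (star P ^ 2 + 1) * X * P * P + star P ^ 2 * star X * (P ^ 2 + 1) := by
        rw [hLN, hNL]; noncomm_ring
    _ = star P * (star X * P + star P * star X) * (P ^ 2 + 1) := by rw [hG]; noncomm_ring
    _ = (star P ^ 2 + 1) * (star P * Q * P) * (P ^ 2 + 1) := by rw [hX]; noncomm_ring

end StarRing

/-- with `Q = νᵗν + c·ψᵗψ`, `ρ = Pᵗ∘Q∘P`, `T = −Pᵗ − (Pᵗ)⁻¹`,
`L = (P² + I)⁻¹∘P²`, if no complex eigenvalue `λ` of `P` has `−λ` also an eigenvalue and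
`X` is the (unique) solution of `Xᵗ∘P + Pᵗ∘Xᵗ = −T∘ρ`, then `X + Xᵗ = Q + ρ`,
`T∘X = Xᵗ∘Tᵗ` and `X∘L + Lᵗ∘Xᵗ = ρ`. -/
theorem stmt_8 [NormedAddCommGroup V] [InnerProductSpace ℝ V] [FiniteDimensional ℝ V]
    [NormedAddCommGroup W] [InnerProductSpace ℝ W] [FiniteDimensional ℝ W]
    (P : Module.End ℝ V)
    (hσ : ∀ μ : ℂ, Module.End.HasEigenvalue (LinearMap.baseChange ℂ (P : V →ₗ[ℝ] V)) μ →
      ¬ Module.End.HasEigenvalue (LinearMap.baseChange ℂ (P : V →ₗ[ℝ] V)) (-μ))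
    (c : ℝ) (ψ : V →ₗ[ℝ] ℝ) (ν : V →ₗ[ℝ] W)
    (Q ρ T L : Module.End ℝ V)
    (hQ : Q = gram ν + c • gram ψ)
    (hρ : ρ = LinearMap.adjoint P * Q * P)
    (hT : T = -LinearMap.adjoint P - Ring.inverse (LinearMap.adjoint P))
    (hL : L = Ring.inverse (P ^ 2 + 1) * P ^ 2)
    (X : Module.End ℝ V)
    (hX : LinearMap.adjoint X * P + LinearMap.adjoint P * LinearMap.adjoint X = -(T * ρ)) :
    X + LinearMap.adjoint X = Q + ρ ∧
    T * X = LinearMap.adjoint X * LinearMap.adjoint T ∧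
    X * L + LinearMap.adjoint L * LinearMap.adjoint X = ρ := by
  have hP : P.charpoly.NoOppositeRoots := by
    intro μ
    simpa only [Module.End.hasEigenvalue_baseChange_iff] using hσ μ
  have hQ_self : IsSelfAdjoint Q := by
    rw [← LinearMap.isSymmetric_iff_isSelfAdjoint, hQ]
    exact (LinearMap.isSymmetric_adjoint_comp_self ν).add
      ((LinearMap.isSymmetric_adjoint_comp_self ψ).smul (conj_trivial c))
  have hS (Z : Module.End ℝ V) := hP.eq_zero_of_mul_add_star_mul_eq_zero (Z := Z)
  have hP_unit : IsUnit P := by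
    simpa using isUnit_aeval_of_isCoprime hP.isCoprime_X P.aeval_self_charpoly
  have hN_unit : IsUnit (P ^ 2 + 1) := by
    simpa using isUnit_aeval_of_isCoprime hP.isCoprime_X_sq_add_one P.aeval_self_charpoly
  simp only [← LinearMap.star_eq_adjoint] at hρ hT hX ⊢
  rw [hρ, neg_mul_star_mul_mul_eq_of_isUnit hP_unit hT] at hX
  have hG := intertwining_of_lyapunov hS hQ_self hX
  rw [hρ]
  exact ⟨add_star_eq_of_lyapunov hS hQ_self hX,
    mul_eq_star_mul_star_of_intertwining hP_unit hT hG,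
    mul_add_star_mul_star_eq_of_intertwining hN_unit hL hG hX⟩
end

section
/- Let V and W be finite-dimensional real inner product spaces, let P be an endomorphism of V such that no complex eigenvalue λ of the complexification P^ℂ of P has −λ also an eigenvalue, let c ≥ 0, ψ : V → ℝ linear, ν : V → W linear, and let X be the unique solution of Xᵗ∘P + Pᵗ∘Xᵗ = −T∘ρ, where T = −Pᵗ − (Pᵗ)⁻¹ and ρ = Pᵗ∘(νᵗν + c·ψᵗψ)∘P. Define Y = ker ν if c = 0 and Y = ker ψ ∩ ker ν if c > 0. Then X is invertible if and only if ker(P^ℂ − αI) ∩ (Y⊗ℂ) = {0} for every eigenvalue α ∈ ℂ of P^ℂ. -/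
/-!
Write `Q = Xᵗ` and `G = νᵗν + c ψᵗψ`, a positive operator with `ker G = Y`. Since `Pᵗ` is
invertible (`0` is not an eigenvalue of `P`, by the hypothesis at `μ = 0`), the defining
equation becomes `Q P + Pᵗ Q = (Pᵗ Pᵗ + 1) G P`. The spectra of `P` and `-Pᵗ` are disjoint, so
`Z ↦ Z P + Pᵗ Z` is injective, and comparing the equation with its adjoint gives
`Q + Qᵗ = G + Pᵗ G P`. On `ker Q` the quadratic form of the left side vanishes, hence so do
`⟪G v, v⟫` and `⟪G P v, P v⟫`: thus `ker Q ⊆ Y`, and then the equation makes `ker Q` invariant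
under `P`. A nonzero `ker Q` therefore contains a complex eigenvector of `P` lying in `Y ⊗ ℂ`.
Conversely, if `v ∈ Y ⊗ ℂ` is an eigenvector of `P` for `α`, the equation says
`Pᵗ (Q v) = -α Q v`, and `-α` is not an eigenvalue of `Pᵗ`, so `Q v = 0`.
-/

open scoped TensorProduct

variable {V W : Type*}

open Polynomial Module LinearMap Module.End
open scoped RealInnerProductSpace

theorem Ring.add_inverse_mul_mul_eq {R : Type*} [Ring R] {a : R} (ha : IsUnit a) (b : R) :
    (a + Ring.inverse a) * (a * b) = (a * a + 1) * b := by
  rw [add_mul, ← mul_assoc (Ring.inverse a), Ring.inverse_mul_cancel a ha, ← mul_assoc, add_mul,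
    one_mul]

section Intertwining

variable {R M N : Type*} [CommRing R] [AddCommGroup M] [Module R M] [AddCommGroup N] [Module R N]
  {f : End R M} {g : End R N} {Z : M →ₗ[R] N}

theorem LinearMap.comp_aeval_eq_aeval_comp (h : Z ∘ₗ f = g ∘ₗ Z) (p : R[X]) :
    Z ∘ₗ aeval f p = aeval g p ∘ₗ Z := by
  induction p using Polynomial.induction_on' with
  | add p q hp hq => rw [map_add, map_add, comp_add, add_comp, hp, hq]
  | monomial n a =>
    simp only [aeval_monomial, Algebra.algebraMap_eq_smul_one, smul_mul_assoc, one_mul, comp_smul,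
      smul_comp, Module.End.commute_pow_left_of_commute h.symm n]

theorem LinearMap.eq_zero_of_comp_eq_comp_of_isCoprime_charpoly [Free R M] [Module.Finite R M]
    [Free R N] [Module.Finite R N] (h : Z ∘ₗ f = g ∘ₗ Z)
    (hfg : IsCoprime f.charpoly g.charpoly) : Z = 0 := by
  -- `a p + b q = 1` and `q(g) = 0` make `p(g)` invertible, while `p(f) = 0`.
  obtain ⟨a, b, hab⟩ := hfg
  have hinv : aeval g a * aeval g f.charpoly = 1 := by
    simpa [aeval_self_charpoly] using congrArg (aeval g) hab
  calc Z = (aeval g a * aeval g f.charpoly) ∘ₗ Z := by rw [hinv, Module.End.one_eq_id, id_comp]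
    _ = aeval g a ∘ₗ Z ∘ₗ aeval f f.charpoly := by
      rw [Module.End.mul_eq_comp, comp_assoc, comp_aeval_eq_aeval_comp h]
    _ = 0 := by rw [aeval_self_charpoly, comp_zero, comp_zero]

end Intertwining

section Eigenvalues

variable {K L M N : Type*} [Field K] [Field L] [Algebra K L] [AddCommGroup M] [Module K M]
  [FiniteDimensional K M] [AddCommGroup N] [Module K N] [FiniteDimensional K N]

theorem Module.End.hasEigenvalue_baseChange_iff_aeval_charpoly (f : End K M) (μ : L) :
    HasEigenvalue (f.baseChange L) μ ↔ aeval μ f.charpoly = 0 := by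
  rw [hasEigenvalue_iff_isRoot_charpoly, charpoly_baseChange, IsRoot, eval_map_algebraMap]

theorem Module.End.isUnit_of_not_hasEigenvalue_baseChange_zero {f : End K M}
    (hf : ¬ HasEigenvalue (f.baseChange L) 0) : IsUnit f := by
  rw [isUnit_iff_ker_eq_bot, ← eigenspace_zero, ← not_ne_iff, ← hasEigenvalue_iff,
    hasEigenvalue_iff_isRoot_charpoly, IsRoot.def, ← coe_aeval_eq_eval,
    ← (algebraMap K L).injective.eq_iff, ← aeval_algebraMap_apply, map_zero]
  rwa [← hasEigenvalue_baseChange_iff_aeval_charpoly]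

theorem Module.End.isCoprime_charpoly_of_forall_hasEigenvalue_baseChange [IsAlgClosed L]
    {f : End K M} {g : End K N}
    (h : ∀ μ : L, HasEigenvalue (f.baseChange L) μ → ¬ HasEigenvalue (g.baseChange L) μ) :
    IsCoprime f.charpoly g.charpoly := by
  rw [isCoprime_iff_aeval_ne_zero_of_isAlgClosed K L]
  intro μ
  rw [ne_eq, ne_eq, ← hasEigenvalue_baseChange_iff_aeval_charpoly,
    ← hasEigenvalue_baseChange_iff_aeval_charpoly]
  tauto

theorem Module.End.exists_eigenspace_baseChange_inf_ne_bot [IsAlgClosed L] (f : End K M)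
    {U : Submodule K M} (hU : U ≠ ⊥) (hfU : ∀ x ∈ U, f x ∈ U) :
    ∃ μ : L, eigenspace (f.baseChange L) μ ⊓ U.baseChange L ≠ ⊥ := by
  have : Nontrivial (L ⊗[K] U) := by
    rw [← Module.finrank_pos_iff (R := L), finrank_baseChange, Module.finrank_pos_iff]
    exact Submodule.nontrivial_iff_ne_bot.mpr hU
  obtain ⟨μ, hμ⟩ := exists_eigenvalue ((f.restrict hfU).baseChange L)
  obtain ⟨w, hw, hw0⟩ := hμ.exists_hasEigenvector
  have hinj : Function.Injective (U.subtype.baseChange L) := by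
    rw [baseChange_eq_ltensor]
    exact Module.Flat.lTensor_preserves_injective_linearMap _ U.injective_subtype
  refine ⟨μ, (Submodule.ne_bot_iff _).mpr
    ⟨U.subtype.baseChange L w, Submodule.mem_inf.mpr ⟨?_, w, rfl⟩, ?_⟩⟩
  · rw [mem_eigenspace_iff] at hw ⊢
    rw [← comp_apply, ← baseChange_comp, ← domRestrict, ← subtype_comp_restrict hfU,
      baseChange_comp, comp_apply, hw, map_smul]
  · rwa [ne_eq, map_eq_zero_iff _ hinj]

theorem Module.End.isUnit_of_eigenspace_baseChange_inf_eq_bot [IsAlgClosed L] {P Q : End K M}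
    {U : Submodule K M} (hQU : ker Q ≤ U) (hQP : ∀ v ∈ ker Q, P v ∈ ker Q)
    (h : ∀ μ : L, HasEigenvalue (P.baseChange L) μ →
      eigenspace (P.baseChange L) μ ⊓ U.baseChange L = ⊥) :
    IsUnit Q := by
  rw [isUnit_iff_ker_eq_bot]
  by_contra hQ
  obtain ⟨μ, hμ⟩ := exists_eigenspace_baseChange_inf_ne_bot (L := L) P hQ hQP
  have hμP : HasEigenvalue (P.baseChange L) μ :=
    hasEigenvalue_iff.mpr (ne_bot_of_le_ne_bot hμ inf_le_left)
  exact hμ (eq_bot_iff.mpr ((inf_le_inf_left _ (Submodule.baseChange_mono L hQU)).trans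
    (h μ hμP).le))

end Eigenvalues

theorem Submodule.baseChange_ker_le_ker_baseChange {R A M N : Type*} [CommSemiring R] [Semiring A]
    [Algebra R A] [AddCommMonoid M] [Module R M] [AddCommMonoid N] [Module R N] (g : M →ₗ[R] N) :
    (ker g).baseChange A ≤ ker (g.baseChange A) := by
  rw [Submodule.baseChange, range_le_ker_iff, ← baseChange_comp, comp_ker_subtype, baseChange_zero]

section MulAddMulEq

variable {K L M : Type*} [CommRing K] [CommRing L] [Algebra K L] [AddCommGroup M] [Module K M]
  {P B G Q S : End K M}

theorem Module.End.mem_eigenspace_neg_of_mul_add_mul_eq (hQ : Q * P + B * Q = S * G * P)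
    {μ : K} {v : M} (hv : v ∈ eigenspace P μ) (hGv : G v = 0) : Q v ∈ eigenspace B (-μ) := by
  rw [mem_eigenspace_iff] at hv ⊢
  have := congrArg (· v) hQ
  simp only [LinearMap.add_apply, Module.End.mul_apply, hv, map_smul, hGv, smul_zero,
    map_zero] at this
  rw [neg_smul, eq_neg_iff_add_eq_zero, add_comm, this]

theorem Module.End.mapsTo_ker_of_mul_add_mul_eq (hQ : Q * P + B * Q = S * G * P)
    (hQG : ∀ v ∈ ker Q, P v ∈ ker G) : ∀ v ∈ ker Q, P v ∈ ker Q := by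
  intro v hv
  have := congrArg (· v) hQ
  simp only [LinearMap.add_apply, Module.End.mul_apply, mem_ker.mp hv, mem_ker.mp (hQG v hv),
    map_zero, add_zero] at this
  exact this

theorem Module.End.eigenspace_baseChange_inf_eq_bot_of_isUnit (hQ : Q * P + B * Q = S * G * P)
    (hQu : IsUnit Q) {μ : L} (hμ : ¬ HasEigenvalue (B.baseChange L) (-μ)) :
    eigenspace (P.baseChange L) μ ⊓ (ker G).baseChange L = ⊥ := by
  have hQL : Q.baseChange L * P.baseChange L + B.baseChange L * Q.baseChange L =
      S.baseChange L * G.baseChange L * P.baseChange L := by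
    simpa only [baseChange_add, baseChange_mul] using congrArg (baseChange L) hQ
  have hQLinj : Function.Injective (Q.baseChange L) :=
    ((Module.End.isUnit_iff _).mp (hQu.map (baseChangeHom K L M))).injective
  rw [hasEigenvalue_iff, not_ne_iff] at hμ
  refine eq_bot_iff.mpr fun v hv => ?_
  obtain ⟨hvP, hvG⟩ := Submodule.mem_inf.mp hv
  have := mem_eigenspace_neg_of_mul_add_mul_eq hQL hvP
    (Submodule.baseChange_ker_le_ker_baseChange G hvG)
  rw [hμ, Submodule.mem_bot, map_eq_zero_iff _ hQLinj] at this
  exact this ▸ Submodule.zero_mem _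

end MulAddMulEq

section InnerProductSpace

variable [NormedAddCommGroup V] [InnerProductSpace ℝ V] [FiniteDimensional ℝ V]

theorem LinearMap.charpoly_adjoint_s9 (P : End ℝ V) : (adjoint P).charpoly = P.charpoly := by
  let b := (stdOrthonormalBasis ℝ V).toBasis
  rw [← charpoly_toMatrix (adjoint P) b, ← charpoly_toMatrix P b, toMatrix_adjoint,
    Matrix.conjTranspose_eq_transpose_of_trivial, Matrix.charpoly_transpose]

theorem Module.End.hasEigenvalue_baseChange_adjoint_iff {L : Type*} [Field L] [Algebra ℝ L]
    (P : End ℝ V) (μ : L) :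
    HasEigenvalue ((adjoint P).baseChange L) μ ↔ HasEigenvalue (P.baseChange L) μ := by
  rw [hasEigenvalue_baseChange_iff_aeval_charpoly, hasEigenvalue_baseChange_iff_aeval_charpoly,
    charpoly_adjoint_s9]

section Lyapunov

variable {L : Type*} [Field L] [IsAlgClosed L] [Algebra ℝ L] {P : End ℝ V}

theorem eq_zero_of_mul_add_adjoint_mul_eq_zero
    (hP : ∀ μ : L, HasEigenvalue (P.baseChange L) μ → ¬ HasEigenvalue (P.baseChange L) (-μ))
    {Z : End ℝ V} (hZ : Z * P + adjoint P * Z = 0) : Z = 0 := by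
  refine eq_zero_of_comp_eq_comp_of_isCoprime_charpoly (g := -adjoint P) ?_
    (isCoprime_charpoly_of_forall_hasEigenvalue_baseChange fun μ hμ h => hP μ hμ ?_)
  · rw [LinearMap.neg_comp, ← Module.End.mul_eq_comp, ← Module.End.mul_eq_comp,
      eq_neg_of_add_eq_zero_left hZ]
  · rwa [baseChange_neg, hasEigenvalue_neg_iff, hasEigenvalue_baseChange_adjoint_iff] at h

theorem add_adjoint_eq_of_mul_add_adjoint_mul_eq
    (hP : ∀ μ : L, HasEigenvalue (P.baseChange L) μ → ¬ HasEigenvalue (P.baseChange L) (-μ))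
    {G Q : End ℝ V} (hG : adjoint G = G)
    (hQ : Q * P + adjoint P * Q = (adjoint P * adjoint P + 1) * G * P) :
    Q + adjoint Q = G + adjoint P * G * P := by
  simp only [← star_eq_adjoint] at hG hQ ⊢
  have hQ' : star Q * P + star P * star Q = star P * G * (P * P + 1) := by
    simpa [add_comm, hG, mul_assoc] using congrArg star hQ
  refine sub_eq_zero.mp (eq_zero_of_mul_add_adjoint_mul_eq_zero hP ?_)
  rw [← star_eq_adjoint]
  calc (Q + star Q - (G + star P * G * P)) * P + star P * (Q + star Q - (G + star P * G * P))
      = (Q * P + star P * Q) + (star Q * P + star P * star Q)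
        - (G * P + star P * G * P * P + star P * G + star P * star P * G * P) := by noncomm_ring
    _ = 0 := by rw [hQ, hQ']; noncomm_ring

theorem ker_le_ker_inf_comap_ker_of_add_adjoint_eq {G Q : End ℝ V}
    (hG : G.IsPositive) (hG0 : ∀ v, ⟪G v, v⟫ = 0 → G v = 0)
    (hQ : Q + adjoint Q = G + adjoint P * G * P) :
    ker Q ≤ ker G ⊓ (ker G).comap P := by
  intro v hv
  have hsum : ⟪G v, v⟫ + ⟪G (P v), P v⟫ = 0 := by
    have := congrArg (fun T : End ℝ V => ⟪T v, v⟫) hQ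
    simp only [LinearMap.add_apply, Module.End.mul_apply, inner_add_left, adjoint_inner_left,
      mem_ker.mp hv, inner_zero_left, inner_zero_right] at this
    linarith
  have hv := hG.inner_nonneg_left v
  have hPv := hG.inner_nonneg_left (P v)
  exact ⟨hG0 v (by linarith), hG0 (P v) (by linarith)⟩

end Lyapunov

end InnerProductSpace

section Gram

variable [NormedAddCommGroup V] [InnerProductSpace ℝ V] [FiniteDimensional ℝ V]
  [NormedAddCommGroup W] [InnerProductSpace ℝ W] [FiniteDimensional ℝ W]
  {c : ℝ} (ψ : V →ₗ[ℝ] ℝ) (ν : V →ₗ[ℝ] W)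

theorem inner_gram_apply_self (v : V) : ⟪gram ν v, v⟫ = ‖ν v‖ ^ 2 := by
  rw [gram, comp_apply, adjoint_inner_left, real_inner_self_eq_norm_sq]

theorem inner_gram_add_smul_gram_apply_self (v : V) :
    ⟪(gram ν + c • gram ψ) v, v⟫ = ‖ν v‖ ^ 2 + c * ‖ψ v‖ ^ 2 := by
  rw [LinearMap.add_apply, LinearMap.smul_apply, inner_add_left, real_inner_smul_left,
    inner_gram_apply_self, inner_gram_apply_self]

theorem inner_gram_add_smul_gram_apply_self_eq_zero_iff (hc : 0 ≤ c) (v : V) :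
    ⟪(gram ν + c • gram ψ) v, v⟫ = 0 ↔ v ∈ if c = 0 then ker ν else ker ψ ⊓ ker ν := by
  rw [inner_gram_add_smul_gram_apply_self,
    add_eq_zero_iff_of_nonneg (by positivity) (by positivity)]
  split_ifs with h
  · simp [h]
  · simp [h, and_comm]

theorem ker_gram_add_smul_gram (hc : 0 ≤ c) :
    ker (gram ν + c • gram ψ) = if c = 0 then ker ν else ker ψ ⊓ ker ν := by
  ext v
  rw [← inner_gram_add_smul_gram_apply_self_eq_zero_iff ψ ν hc, mem_ker]
  refine ⟨fun h => by rw [h, inner_zero_left], fun h => ?_⟩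
  have hv := (inner_gram_add_smul_gram_apply_self_eq_zero_iff ψ ν hc v).mp h
  split_ifs at hv with hc0
  · simp [gram, hc0, mem_ker.mp hv]
  · simp [gram, mem_ker.mp hv.1, mem_ker.mp hv.2]

end Gram

/-- with `T = −Pᵗ − (Pᵗ)⁻¹`, `ρ = Pᵗ∘(νᵗν + c·ψᵗψ)∘P`, `c ≥ 0`, and `X` the
(unique) solution of `Xᵗ∘P + Pᵗ∘Xᵗ = −T∘ρ`, setting `Y = ker ν` if `c = 0` and
`Y = ker ψ ∩ ker ν` if `c > 0`, `X` is invertible iff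
`ker(P^ℂ − αI) ∩ (Y ⊗ ℂ) = 0` for every eigenvalue `α` of `P^ℂ`. -/
theorem stmt_9 [NormedAddCommGroup V] [InnerProductSpace ℝ V] [FiniteDimensional ℝ V]
    [NormedAddCommGroup W] [InnerProductSpace ℝ W] [FiniteDimensional ℝ W]
    (P : Module.End ℝ V)
    (hσ : ∀ μ : ℂ, Module.End.HasEigenvalue (LinearMap.baseChange ℂ (P : V →ₗ[ℝ] V)) μ →
      ¬ Module.End.HasEigenvalue (LinearMap.baseChange ℂ (P : V →ₗ[ℝ] V)) (-μ))
    (c : ℝ) (hc : 0 ≤ c) (ψ : V →ₗ[ℝ] ℝ) (ν : V →ₗ[ℝ] W)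
    (T ρ : Module.End ℝ V)
    (hT : T = -LinearMap.adjoint P - Ring.inverse (LinearMap.adjoint P))
    (hρ : ρ = LinearMap.adjoint P * (gram ν + c • gram ψ) * P)
    (X : Module.End ℝ V)
    (hX : LinearMap.adjoint X * P + LinearMap.adjoint P * LinearMap.adjoint X = -(T * ρ))
    (Y : Submodule ℝ V)
    (hY : Y = if c = 0 then LinearMap.ker ν else LinearMap.ker ψ ⊓ LinearMap.ker ν) :
    Function.Bijective X ↔
      ∀ μ : ℂ, Module.End.HasEigenvalue (LinearMap.baseChange ℂ (P : V →ₗ[ℝ] V)) μ →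
        Module.End.eigenspace (LinearMap.baseChange ℂ (P : V →ₗ[ℝ] V)) μ ⊓
          Submodule.baseChange ℂ Y = ⊥ := by
  have hGpos : (gram ν + c • gram ψ).IsPositive :=
    (isPositive_adjoint_comp_self ν).add ((isPositive_adjoint_comp_self ψ).smul_of_nonneg hc)
  have hG0 : ∀ v, ⟪(gram ν + c • gram ψ) v, v⟫ = 0 → (gram ν + c • gram ψ) v = 0 := by
    intro v hv
    rwa [← mem_ker, ker_gram_add_smul_gram ψ ν hc,
      ← inner_gram_add_smul_gram_apply_self_eq_zero_iff ψ ν hc]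
  have hAu : IsUnit (adjoint P) := by
    rw [← star_eq_adjoint]
    exact (isUnit_of_not_hasEigenvalue_baseChange_zero fun h => hσ 0 h (by rwa [neg_zero])).star
  have hQ : adjoint X * P + adjoint P * adjoint X =
      (adjoint P * adjoint P + 1) * (gram ν + c • gram ψ) * P := by
    rw [hX, hT, hρ, ← neg_add', neg_mul, neg_neg, mul_assoc (adjoint P),
      Ring.add_inverse_mul_mul_eq hAu, mul_assoc]
  have hker := ker_le_ker_inf_comap_ker_of_add_adjoint_eq hGpos hG0
    (add_adjoint_eq_of_mul_add_adjoint_mul_eq hσ hGpos.adjoint_eq hQ)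
  rw [hY, ← ker_gram_add_smul_gram ψ ν hc, ← Module.End.isUnit_iff, ← isUnit_star,
    star_eq_adjoint]
  refine ⟨fun hXu μ hμ => eigenspace_baseChange_inf_eq_bot_of_isUnit hQ hXu ?_,
    isUnit_of_eigenspace_baseChange_inf_eq_bot (fun v hv => (hker hv).1)
      (mapsTo_ker_of_mul_add_mul_eq hQ fun v hv => (hker hv).2)⟩
  rw [hasEigenvalue_baseChange_adjoint_iff]
  exact hσ μ hμ
end

section
/- Let V be a finite-dimensional real inner product space and P an endomorphism of V such that no complex eigenvalue λ of P has −λ also an eigenvalue (so P is invertible). Set T = −Pᵗ − (Pᵗ)⁻¹. Let γ₁, …, γₙ ∈ V and v₁, …, vₙ ∈ ℝ with Σ_{i=1}^n v_i² = 1, set φ = −Σ_{i=1}^n v_i Pᵗγ_i and ρ = Pᵗ∘(Σ_{i=1}^n γ_iγ_iᵗ)∘P. Suppose Ω ∈ End(V) is invertible and satisfies Ωᵗ∘P + Pᵗ∘Ωᵗ + T∘ρ = 0 and T∘Ω = Ωᵗ∘Tᵗ. Then the numbers ṽ_i := v_i − ⟨γ_i, TᵗΩ⁻¹φ⟩ satisfy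 Σ_{i=1}^n ṽ_i² = 1. -/
/-!
The eigenvalue condition at `μ = 0` makes `P` invertible. Write `Q = Pᵗ`, `G = Σ γᵢγᵢᵗ`,
`ψ = Ω⁻¹φ` and `A = T Q⁻¹ Ω`. Since `T` commutes with `Q`, the first equation for `Ω` gives
`T G = -Q⁻¹Ωᵗ - ΩᵗP⁻¹`, and together with `T Ω = Ωᵗ Tᵗ` this yields `Aᵗ + A + T G Tᵗ = 0`.
Expanding the squares, `Σ ṽᵢ² - Σ vᵢ² = ⟨G w, w⟩ - 2⟨Σ vᵢγᵢ, w⟩` with `w = Tᵗψ`, and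
`Σ vᵢγᵢ = -Q⁻¹Ωψ`; so the difference is the quadratic form of `Aᵗ + A + T G Tᵗ` at `ψ`.
-/

open scoped TensorProduct RealInnerProductSpace

variable {V : Type*}

/-- The rank-one endomorphism `xyᵗ : w ↦ ⟨y, w⟩ x`. -/
noncomputable def rankOne [NormedAddCommGroup V] [InnerProductSpace ℝ V]
    (x y : V) : Module.End ℝ V :=
  LinearMap.smulRight (innerₛₗ ℝ y) x

open scoped Ring

theorem Module.End.isUnit_of_not_hasEigenvalue_zero_baseChange {K L M : Type*} [Field K]
    [Field L] [Algebra K L] [AddCommGroup M] [Module K M] [FiniteDimensional K M]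
    {f : Module.End K M} (hf : ¬ Module.End.HasEigenvalue (f.baseChange L) 0) : IsUnit f := by
  have hdet := ((LinearMap.not_hasEigenvalue_zero_tfae (f.baseChange L)).out 0 3).mp hf
  rw [LinearMap.det_baseChange, map_ne_zero] at hdet
  exact (LinearMap.isUnit_iff_isUnit_det f).mpr hdet.isUnit

theorem star_add_self_add_mul_mul_star_eq_zero {R : Type*} [Ring R] [StarRing R]
    {P T Ω G : R} (hP : IsUnit P) (hTP : Commute T (star P))
    (h₁ : star Ω * P + star P * star Ω + T * (star P * G * P) = 0)
    (h₂ : T * Ω = star Ω * star T) :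
    star (T * (star P)⁻¹ʳ * Ω) + T * (star P)⁻¹ʳ * Ω + T * G * star T = 0 := by
  set Q := star P
  have hQ : IsUnit Q := hP.star
  have hTQ' : Commute T Q⁻¹ʳ := by
    rw [Ring.inverse_of_isUnit hQ]
    exact (hQ.unit_spec ▸ hTP).units_inv_right
  have hTG : T * G = -(Q⁻¹ʳ * star Ω) - star Ω * P⁻¹ʳ := by
    refine hQ.mul_left_cancel (hP.mul_right_cancel ?_)
    calc Q * (T * G) * P = T * (Q * G * P) := by
          rw [← mul_assoc, ← hTP.eq, mul_assoc T, mul_assoc]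
      _ = -(star Ω * P + Q * star Ω) := eq_neg_of_add_eq_zero_right h₁
      _ = Q * (-(Q⁻¹ʳ * star Ω) - star Ω * P⁻¹ʳ) * P := by
        simp only [mul_sub, sub_mul, mul_neg, neg_mul, Ring.mul_inverse_cancel_left _ _ hQ,
          mul_assoc, Ring.inverse_mul_cancel _ hP, mul_one]
        abel
  have hstar : star Q⁻¹ʳ = P⁻¹ʳ := by rw [Ring.inverse_star, star_star]
  calc star (T * Q⁻¹ʳ * Ω) + T * Q⁻¹ʳ * Ω + T * G * star T
      = T * Q⁻¹ʳ * Ω - Q⁻¹ʳ * (T * Ω) := by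
        rw [star_mul, star_mul, hstar, hTG, h₂]; noncomm_ring
    _ = 0 := by rw [← mul_assoc, hTQ'.eq, sub_self]

section InnerProductSpace

variable [NormedAddCommGroup V] [InnerProductSpace ℝ V]

theorem rankOne_apply (x y w : V) : rankOne x y w = ⟪y, w⟫ • x := rfl

theorem inner_sum_rankOne_self_apply_self {ι : Type*} [Fintype ι] (γ : ι → V) (w : V) :
    ⟪(∑ i, rankOne (γ i) (γ i)) w, w⟫ = ∑ i, ⟪γ i, w⟫ ^ 2 := by
  simp only [LinearMap.sum_apply, sum_inner, rankOne_apply, real_inner_smul_left, sq]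

theorem sum_sub_inner_sq {ι : Type*} [Fintype ι] (γ : ι → V) (v : ι → ℝ) (w : V) :
    ∑ i, (v i - ⟪γ i, w⟫) ^ 2 =
      ∑ i, v i ^ 2 + (⟪(∑ i, rankOne (γ i) (γ i)) w, w⟫ - 2 * ⟪∑ i, v i • γ i, w⟫) := by
  simp only [inner_sum_rankOne_self_apply_self, sum_inner, real_inner_smul_left, Finset.mul_sum,
    ← Finset.sum_add_distrib, ← Finset.sum_sub_distrib]
  exact Finset.sum_congr rfl fun i _ => by ring

theorem inner_apply_self_eq_neg_two_mul_of_star_add_self_add_eq_zero [FiniteDimensional ℝ V]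
    {A B : Module.End ℝ V} (h : star A + A + B = 0) (x : V) : ⟪B x, x⟫ = -2 * ⟪A x, x⟫ := by
  have hA : ⟪star A x, x⟫ = ⟪A x, x⟫ := by
    rw [LinearMap.star_eq_adjoint, LinearMap.adjoint_inner_left, real_inner_comm]
  have hx := congrArg (fun S : Module.End ℝ V => ⟪S x, x⟫) h
  simp only [LinearMap.add_apply, inner_add_left, LinearMap.zero_apply, inner_zero_left] at hx
  linarith

end InnerProductSpace

/-- if `σ(P) ∩ (−σ(P)) = ∅`, `T = −Pᵗ − (Pᵗ)⁻¹`, `Σ vᵢ² = 1`,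
`φ = −Σ vᵢ Pᵗγᵢ`, `ρ = Pᵗ∘(Σ γᵢγᵢᵗ)∘P`, and `Ω` is invertible with
`Ωᵗ∘P + Pᵗ∘Ωᵗ + T∘ρ = 0` and `T∘Ω = Ωᵗ∘Tᵗ`, then the numbers
`ṽᵢ = vᵢ − ⟨γᵢ, TᵗΩ⁻¹φ⟩` satisfy `Σ ṽᵢ² = 1`. -/
theorem stmt_15 [NormedAddCommGroup V] [InnerProductSpace ℝ V] [FiniteDimensional ℝ V]
    (P : Module.End ℝ V)
    (hσ : ∀ μ : ℂ, Module.End.HasEigenvalue (LinearMap.baseChange ℂ (P : V →ₗ[ℝ] V)) μ →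
      ¬ Module.End.HasEigenvalue (LinearMap.baseChange ℂ (P : V →ₗ[ℝ] V)) (-μ))
    (T : Module.End ℝ V)
    (hT : T = -LinearMap.adjoint P - Ring.inverse (LinearMap.adjoint P))
    (n : ℕ) (γ : Fin n → V) (v : Fin n → ℝ)
    (hv : ∑ i, v i ^ 2 = 1)
    (φ : V) (hφ : φ = -∑ i, v i • (LinearMap.adjoint P) (γ i))
    (ρ : Module.End ℝ V)
    (hρ : ρ = LinearMap.adjoint P * (∑ i, rankOne (γ i) (γ i)) * P)
    (Ω : Module.End ℝ V) (hΩu : IsUnit Ω)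
    (hΩ1 : LinearMap.adjoint Ω * P + LinearMap.adjoint P * LinearMap.adjoint Ω + T * ρ = 0)
    (hΩ2 : T * Ω = LinearMap.adjoint Ω * LinearMap.adjoint T) :
    ∑ i, (v i - ⟪γ i, (LinearMap.adjoint T * Ring.inverse Ω) φ⟫) ^ 2 = 1 := by
  have hP : IsUnit P :=
    Module.End.isUnit_of_not_hasEigenvalue_zero_baseChange fun h => hσ 0 h (by rwa [neg_zero])
  simp only [← LinearMap.star_eq_adjoint] at hT hφ hρ hΩ1 hΩ2 ⊢
  subst hρ
  set Q := star P
  have hTQ : Commute T Q := by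
    rw [hT]
    exact ((Commute.refl Q).neg_left.sub_left
      ((Ring.inverse_mul_cancel Q hP.star).trans (Ring.mul_inverse_cancel Q hP.star).symm))
  have hA := star_add_self_add_mul_mul_star_eq_zero hP hTQ hΩ1 hΩ2
  set ψ := Ω⁻¹ʳ φ
  have hφψ : Ω ψ = φ := by
    rw [← Module.End.mul_apply, Ring.mul_inverse_cancel Ω hΩu, Module.End.one_apply]
  have hg : ∑ i, v i • γ i = -(Q⁻¹ʳ * Ω) ψ := by
    rw [Module.End.mul_apply, hφψ, hφ, ← map_neg, neg_neg]
    simp only [← map_smul, ← map_sum, ← Module.End.mul_apply, Ring.inverse_mul_cancel Q hP.star,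
      Module.End.one_apply]
  rw [Module.End.mul_apply, sum_sub_inner_sq, hv, hg]
  have hGform : ⟪(∑ i, rankOne (γ i) (γ i)) (star T ψ), star T ψ⟫ =
      ⟪(T * (∑ i, rankOne (γ i) (γ i)) * star T) ψ, ψ⟫ := by
    rw [LinearMap.star_eq_adjoint, LinearMap.adjoint_inner_right]; rfl
  have hAform : ⟪(Q⁻¹ʳ * Ω) ψ, star T ψ⟫ = ⟪(T * Q⁻¹ʳ * Ω) ψ, ψ⟫ := by
    rw [LinearMap.star_eq_adjoint, LinearMap.adjoint_inner_right]; rfl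
  rw [inner_neg_left, hGform, hAform,
    inner_apply_self_eq_neg_two_mul_of_star_add_self_add_eq_zero hA]
  ring
end
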